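/- Let G ⊆ ℝ be a nonempty closed bounded interval with diameter D = max_{a,b ∈ G} |a − b|, let T ≥ 1, and let C_1, C_{−1} > 0 with C_max = max{C_1, C_{−1}} and C_min = min{C_1, C_{−1}}. For each t = 1,…,T let p_t ∈ G and d_t ∈ {−1, +1}, and define the loss l̃_t(τ) = C_{d_t} · log(exp((p_t − τ)·d_t) + 1). Let τ_1 ∈ G be arbitrary and define for t ≥ 1 the projected online gradient descent update τ_{t+1} = P_G(τ_t − α_t · l̃_t'(τ_t)) with step size α_t = (1 + exp(D))² / (t · C_min · exp(D)), where P_G is the Euclidean projection onto G. Then the regret satisfies Σ_{t=1}^T l̃_t(τ_t) − min_{τ ∈ G} Σ_{t=1}^T l̃_t(τ) ≤ (exp(D) · C_max² / (2 C_min)) · (1 + log T). -/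

import Mathlib

/-! At `x = (p - τ) d` the logistic thresholding loss has second derivative
`C σ(x) (1 - σ(x)) = C / (2 + 2 cosh x)`, and `|x| ≤ D` on `G`; hence every loss is
`λ`-strongly convex on `G` with `λ = C_min / (2 + 2 cosh D) = C_min e^D / (1 + e^D)²`, and its
derivative is bounded by `B = C_max σ(D) = C_max e^D / (1 + e^D)`. For `λ`-strongly convex losses
with derivatives bounded by `B`, projected gradient descent with steps `1 / (λ t)` has regret at
most `B² / (2λ) · Σ 1/t ≤ B² / (2λ) · (1 + log T)` (Hazan–Agarwal–Kale), and `B² / (2λ)` is the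
claimed constant. -/

open Real

lemma sq_max_min_sub_le {a b x y : ℝ} (hy : y ∈ Set.Icc a b) :
    (max a (min b x) - y) ^ 2 ≤ (x - y) ^ 2 := by
  have hab : a ≤ b := hy.1.trans hy.2
  have h := Set.abs_projIcc_sub_projIcc hab (c := x) (d := y)
  rw [Set.projIcc_of_mem hab hy] at h
  exact sq_le_sq.2 h

lemma ConvexOn.add_mul_sub_le_of_hasDerivAt {s : Set ℝ} {f : ℝ → ℝ} {f' x y : ℝ}
    (hf : ConvexOn ℝ s f) (hx : x ∈ s) (hy : y ∈ s) (hfx : HasDerivAt f f' x) :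
    f x + f' * (y - x) ≤ f y := by
  rcases lt_trichotomy x y with hxy | rfl | hyx
  · have h := hf.le_slope_of_hasDerivAt hx hy hxy hfx
    rw [slope_def_field, le_div_iff₀ (sub_pos.2 hxy)] at h
    linarith
  · simp
  · have h := hf.slope_le_of_hasDerivAt hy hx hyx hfx
    rw [slope_def_field, div_le_iff₀ (sub_pos.2 hyx)] at h
    linarith

lemma StrongConvexOn.add_mul_sub_add_sq_le_of_hasDerivAt {s : Set ℝ} {f : ℝ → ℝ} {m f' x y : ℝ}
    (hf : StrongConvexOn s m f) (hx : x ∈ s) (hy : y ∈ s) (hfx : HasDerivAt f f' x) :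
    f x + f' * (y - x) + m / 2 * (y - x) ^ 2 ≤ f y := by
  rw [strongConvexOn_iff_convex] at hf
  simp only [Real.norm_eq_abs, sq_abs] at hf
  have hder : HasDerivAt (fun z => f z - m / 2 * z ^ 2) (f' - m * x) x :=
    (hfx.fun_sub ((hasDerivAt_pow 2 x).const_mul (m / 2))).congr_deriv (by ring)
  linear_combination hf.add_mul_sub_le_of_hasDerivAt hx hy hder

lemma strongConvexOn_of_hasDerivAt2_ge {s : Set ℝ} (hs : Convex ℝ s) {f f' f'' : ℝ → ℝ} {m : ℝ}
    (hf : ∀ x, HasDerivAt f (f' x) x) (hf' : ∀ x, HasDerivAt f' (f'' x) x)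
    (hm : ∀ x ∈ interior s, m ≤ f'' x) : StrongConvexOn s m f := by
  rw [strongConvexOn_iff_convex]
  simp only [Real.norm_eq_abs, sq_abs]
  have h1 : ∀ x, HasDerivAt (fun x => f x - m / 2 * x ^ 2) (f' x - m * x) x := fun x =>
    ((hf x).fun_sub ((hasDerivAt_pow 2 x).const_mul (m / 2))).congr_deriv (by ring)
  have h2 : ∀ x, HasDerivAt (fun x => f' x - m * x) (f'' x - m) x := fun x => by
    simpa using (hf' x).fun_sub ((hasDerivAt_id x).const_mul m)
  exact convexOn_of_hasDerivWithinAt2_nonneg hs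
    (fun x _ => (h1 x).continuousAt.continuousWithinAt)
    (fun x _ => (h1 x).hasDerivWithinAt) (fun x _ => (h2 x).hasDerivWithinAt)
    (fun x hx => sub_nonneg.2 (hm x hx))

lemma sum_Icc_inv_le_one_add_log (T : ℕ) : ∑ t ∈ Finset.Icc 1 T, (t : ℝ)⁻¹ ≤ 1 + log T := by
  simpa [harmonic_eq_sum_Icc] using harmonic_le_one_add_log T

lemma Real.sigmoid_eq_exp_div (x : ℝ) : sigmoid x = exp x / (exp x + 1) := by
  rw [sigmoid_def, exp_neg]
  field_simp

lemma Real.sigmoid_mul_one_sub_sigmoid (x : ℝ) :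
    sigmoid x * (1 - sigmoid x) = (2 + 2 * cosh x)⁻¹ := by
  rw [← sigmoid_neg, sigmoid_def, sigmoid_def, cosh_eq, neg_neg]
  have h : exp (-x) * exp x = 1 := by rw [← exp_add, neg_add_cancel, exp_zero]
  field_simp
  linear_combination -h

lemma Real.two_add_two_mul_cosh (x : ℝ) : 2 + 2 * cosh x = (1 + exp x) ^ 2 / exp x := by
  rw [cosh_eq, exp_neg]
  field_simp
  ring

noncomputable def logisticThresholdLoss (c p d θ : ℝ) : ℝ := c * log (exp ((p - θ) * d) + 1)

lemma hasDerivAt_log_exp_add_one (x : ℝ) :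
    HasDerivAt (fun x => log (exp x + 1)) (sigmoid x) x := by
  rw [sigmoid_eq_exp_div]
  exact ((hasDerivAt_exp x).add_const 1).log (by positivity)

lemma hasDerivAt_logisticThresholdLoss (c p d θ : ℝ) :
    HasDerivAt (logisticThresholdLoss c p d) (-(c * d) * sigmoid ((p - θ) * d)) θ := by
  have hx : HasDerivAt (fun θ => (p - θ) * d) (-d) θ := by
    simpa using ((hasDerivAt_id θ).const_sub p).mul_const d
  exact (((hasDerivAt_log_exp_add_one _).comp θ hx).const_mul c).congr_deriv (by ring)

lemma hasDerivAt_deriv_logisticThresholdLoss (c p : ℝ) {d : ℝ} (hd : |d| = 1) (θ : ℝ) :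
    HasDerivAt (fun θ => -(c * d) * sigmoid ((p - θ) * d))
      (c * (2 + 2 * cosh ((p - θ) * d))⁻¹) θ := by
  have hx : HasDerivAt (fun θ => (p - θ) * d) (-d) θ := by
    simpa using ((hasDerivAt_id θ).const_sub p).mul_const d
  have hd2 : d * d = 1 := by rw [← abs_mul_abs_self, hd, one_mul]
  refine (((hasDerivAt_sigmoid _).comp θ hx).const_mul (-(c * d))).congr_deriv ?_
  rw [sigmoid_mul_one_sub_sigmoid]
  linear_combination (c * (2 + 2 * cosh ((p - θ) * d))⁻¹) * hd2

lemma strongConvexOn_logisticThresholdLoss {c p d r : ℝ} {s : Set ℝ} (hc : 0 ≤ c) (hd : |d| = 1)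
    (hs : Convex ℝ s) (hr : ∀ θ ∈ s, |p - θ| ≤ r) :
    StrongConvexOn s (c * (2 + 2 * cosh r)⁻¹) (logisticThresholdLoss c p d) := by
  refine strongConvexOn_of_hasDerivAt2_ge hs (hasDerivAt_logisticThresholdLoss c p d)
    (hasDerivAt_deriv_logisticThresholdLoss c p hd) fun θ hθ => ?_
  have hcosh : cosh ((p - θ) * d) ≤ cosh r := by
    rw [cosh_le_cosh, abs_mul, hd, mul_one]
    exact (hr θ (interior_subset hθ)).trans (le_abs_self r)
  gcongr

lemma abs_deriv_logisticThresholdLoss_le {c p d r θ : ℝ} (hc : 0 ≤ c) (hd : |d| = 1)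
    (hr : |p - θ| ≤ r) : |deriv (logisticThresholdLoss c p d) θ| ≤ c * sigmoid r := by
  have hx : (p - θ) * d ≤ r := (le_abs_self _).trans (by rwa [abs_mul, hd, mul_one])
  rw [(hasDerivAt_logisticThresholdLoss c p d θ).deriv, abs_mul, abs_neg, abs_mul, hd, mul_one,
    abs_of_nonneg hc, abs_of_pos (sigmoid_pos _)]
  exact mul_le_mul_of_nonneg_left (sigmoid_le hx) hc

lemma ogd_step_regret_le {a b m G f' x u fx fu n : ℝ} (hm : 0 < m) (hn : 0 < n)
    (hu : u ∈ Set.Icc a b) (hconv : fx + f' * (u - x) + m / 2 * (u - x) ^ 2 ≤ fu) (hG : |f'| ≤ G) :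
    fx - fu ≤ m / 2 * ((n - 1) * (x - u) ^ 2 - n * (max a (min b (x - (m * n)⁻¹ * f')) - u) ^ 2)
      + G ^ 2 / (2 * m) * n⁻¹ := by
  have hproj := mul_le_mul_of_nonneg_left (sq_max_min_sub_le (x := x - (m * n)⁻¹ * f') hu)
    (by positivity : (0 : ℝ) ≤ m * n / 2)
  have hG2 := mul_le_mul_of_nonneg_left (sq_le_sq' (abs_le.1 hG).1 (abs_le.1 hG).2)
    (by positivity : (0 : ℝ) ≤ (2 * m * n)⁻¹)
  have hexpand : m * n / 2 * (x - (m * n)⁻¹ * f' - u) ^ 2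
      = m * n / 2 * (x - u) ^ 2 - f' * (x - u) + (2 * m * n)⁻¹ * f' ^ 2 := by
    field_simp
    ring
  have hconst : G ^ 2 / (2 * m) * n⁻¹ = (2 * m * n)⁻¹ * G ^ 2 := by field_simp
  rw [hexpand] at hproj
  rw [hconst]
  linarith

theorem ogd_regret_le_of_strongConvexOn {a b m G : ℝ} (hm : 0 < m) {f : ℕ → ℝ → ℝ}
    (hconv : ∀ t, StrongConvexOn (Set.Icc a b) m (f t))
    (hdiff : ∀ t, ∀ θ ∈ Set.Icc a b, DifferentiableAt ℝ (f t) θ)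
    (hG : ∀ t, ∀ θ ∈ Set.Icc a b, |deriv (f t) θ| ≤ G)
    {α τ : ℕ → ℝ} (hα : ∀ t, 1 ≤ t → α t = (m * t)⁻¹) (hτ₁ : τ 1 ∈ Set.Icc a b)
    (hτ : ∀ t, 1 ≤ t → τ (t + 1) = max a (min b (τ t - α t * deriv (f t) (τ t))))
    {u : ℝ} (hu : u ∈ Set.Icc a b) (T : ℕ) :
    ∑ t ∈ Finset.Icc 1 T, (f t (τ t) - f t u) ≤ G ^ 2 / (2 * m) * (1 + log T) := by
  have hab : a ≤ b := hτ₁.1.trans hτ₁.2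
  have hτmem : ∀ t, 1 ≤ t → τ t ∈ Set.Icc a b := by
    refine Nat.le_induction hτ₁ fun t ht _ => ?_
    rw [hτ t ht]
    exact ⟨le_max_left _ _, max_le hab (min_le_left _ _)⟩
  -- With steps `1 / (m t)`, the strong-convexity gain `m / 2 * (τ t - u) ^ 2` makes the distance
  -- terms telescope in `F`.
  set F : ℕ → ℝ := fun t => ((t : ℝ) - 1) * (τ t - u) ^ 2
  have hstep : ∀ t ∈ Finset.Icc 1 T,
      f t (τ t) - f t u ≤ m / 2 * (F t - F (t + 1)) + G ^ 2 / (2 * m) * (t : ℝ)⁻¹ := by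
    intro t ht
    have ht1 := (Finset.mem_Icc.1 ht).1
    have hτt := hτmem t ht1
    have h := ogd_step_regret_le (n := t) hm (by positivity) hu
      ((hconv t).add_mul_sub_add_sq_le_of_hasDerivAt hτt hu (hdiff t _ hτt).hasDerivAt) (hG t _ hτt)
    rw [← hα t ht1, ← hτ t ht1] at h
    simpa [F] using h
  have htelescope : ∑ t ∈ Finset.Icc 1 T, (F t - F (t + 1)) = F 1 - F (T + 1) := by
    rw [← Finset.Ico_add_one_right_eq_Icc, ← neg_sub,
      ← Finset.sum_Ico_sub F (by omega : 1 ≤ T + 1), ← Finset.sum_neg_distrib]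
    simp only [neg_sub]
  have hF₁ : F 1 = 0 := by simp [F]
  have hF : 0 ≤ F (T + 1) := by
    simp only [F, Nat.cast_add, Nat.cast_one, add_sub_cancel_right]
    positivity
  calc ∑ t ∈ Finset.Icc 1 T, (f t (τ t) - f t u)
      ≤ ∑ t ∈ Finset.Icc 1 T, (m / 2 * (F t - F (t + 1)) + G ^ 2 / (2 * m) * (t : ℝ)⁻¹) :=
        Finset.sum_le_sum hstep
    _ = m / 2 * (F 1 - F (T + 1)) + G ^ 2 / (2 * m) * ∑ t ∈ Finset.Icc 1 T, (t : ℝ)⁻¹ := by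
        rw [Finset.sum_add_distrib, ← Finset.mul_sum, ← Finset.mul_sum, htelescope]
    _ ≤ G ^ 2 / (2 * m) * (1 + log T) := by
        have hpot : m / 2 * (F 1 - F (T + 1)) ≤ 0 :=
          mul_nonpos_of_nonneg_of_nonpos (by positivity) (by rw [hF₁]; linarith)
        have hharm := mul_le_mul_of_nonneg_left (sum_Icc_inv_le_one_add_log T)
          (by positivity : 0 ≤ G ^ 2 / (2 * m))
        linarith

theorem ogd_logistic_threshold_regret_general
    (a b : ℝ) (D : ℝ) (hD : D = b - a)
    (T : ℕ)
    (Cp Cm : ℝ) (hCp : 0 < Cp) (hCm : 0 < Cm)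
    (Cmax Cmin : ℝ) (hCmax : Cmax = max Cp Cm) (hCmin : Cmin = min Cp Cm)
    (p : ℕ → ℝ) (hp : ∀ t, p t ∈ Set.Icc a b)
    (d : ℕ → ℝ) (hd : ∀ t, d t = -1 ∨ d t = 1)
    (l : ℕ → ℝ → ℝ)
    (hl : ∀ t τ, l t τ =
      (if d t = 1 then Cp else Cm) * Real.log (Real.exp ((p t - τ) * d t) + 1))
    (α : ℕ → ℝ)
    (hα : ∀ t, α t = (1 + Real.exp D) ^ 2 / ((t : ℝ) * Cmin * Real.exp D))
    (P : ℝ → ℝ) (hP : ∀ x, P x = max a (min b x))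
    (τ : ℕ → ℝ) (hτ₁ : τ 1 ∈ Set.Icc a b)
    (hτrec : ∀ t, 1 ≤ t → τ (t + 1) = P (τ t - α t * deriv (l t) (τ t))) :
    ∀ τstar ∈ Set.Icc a b,
      ∑ t ∈ Finset.Icc 1 T, l t (τ t) - ∑ t ∈ Finset.Icc 1 T, l t τstar ≤
        Real.exp D * Cmax ^ 2 / (2 * Cmin) * (1 + Real.log T) := by
  intro τstar hτstar
  set c : ℕ → ℝ := fun t => if d t = 1 then Cp else Cm
  have hc : ∀ t, 0 ≤ c t ∧ Cmin ≤ c t ∧ c t ≤ Cmax := fun t => by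
    simp only [c, hCmin, hCmax]
    split_ifs <;> refine ⟨by positivity, by simp, by simp⟩
  have hCmin₀ : 0 < Cmin := hCmin ▸ lt_min hCp hCm
  have hl' : ∀ t, l t = logisticThresholdLoss (c t) (p t) (d t) := fun t => funext (hl t)
  have hd' : ∀ t, |d t| = 1 := fun t => by rcases hd t with h | h <;> simp [h]
  have hdist : ∀ t, ∀ θ ∈ Set.Icc a b, |p t - θ| ≤ D := fun t θ hθ => by
    rw [abs_sub_le_iff, hD]
    constructor <;> linarith [(hp t).1, (hp t).2, hθ.1, hθ.2]
  have hregret := ogd_regret_le_of_strongConvexOn (f := l) (m := Cmin * (2 + 2 * cosh D)⁻¹)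
    (G := Cmax * sigmoid D) (by positivity)
    (fun t => hl' t ▸ (strongConvexOn_logisticThresholdLoss (hc t).1 (hd' t) (convex_Icc a b)
      (hdist t)).mono (by gcongr; exact (hc t).2.1))
    (fun t θ _ => hl' t ▸ (hasDerivAt_logisticThresholdLoss _ _ _ θ).differentiableAt)
    (fun t θ hθ => hl' t ▸ (abs_deriv_logisticThresholdLoss_le (hc t).1 (hd' t)
      (hdist t θ hθ)).trans (mul_le_mul_of_nonneg_right (hc t).2.2 (sigmoid_nonneg D)))
    (fun t _ => by rw [hα t, two_add_two_mul_cosh]; field_simp)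
    hτ₁ (fun t ht => (hτrec t ht).trans (hP _)) hτstar T
  rw [← Finset.sum_sub_distrib]
  convert hregret using 2
  rw [sigmoid_eq_exp_div, two_add_two_mul_cosh]
  field_simp
  ring

/-- Logarithmic regret of projected online gradient descent for the adaptive
threshold over a closed bounded interval `G = [a, b]` with diameter `D`,
against the best fixed threshold in `G`, using logistic thresholding losses
and step sizes `α_t = (1+e^D)²/(t·C_min·e^D)`. -/
theorem ogd_logistic_threshold_regret
    (a b : ℝ) (hab : a ≤ b) (D : ℝ) (hD : D = b - a)
    (T : ℕ) (hT : 1 ≤ T)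
    (Cp Cm : ℝ) (hCp : 0 < Cp) (hCm : 0 < Cm)
    (Cmax Cmin : ℝ) (hCmax : Cmax = max Cp Cm) (hCmin : Cmin = min Cp Cm)
    (p : ℕ → ℝ) (hp : ∀ t, p t ∈ Set.Icc a b)
    (d : ℕ → ℝ) (hd : ∀ t, d t = -1 ∨ d t = 1)
    (l : ℕ → ℝ → ℝ)
    (hl : ∀ t τ, l t τ =
      (if d t = 1 then Cp else Cm) * Real.log (Real.exp ((p t - τ) * d t) + 1))
    (α : ℕ → ℝ)
    (hα : ∀ t, α t = (1 + Real.exp D) ^ 2 / ((t : ℝ) * Cmin * Real.exp D))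
    (P : ℝ → ℝ) (hP : ∀ x, P x = max a (min b x))
    (τ : ℕ → ℝ) (hτ₁ : τ 1 ∈ Set.Icc a b)
    (hτrec : ∀ t, 1 ≤ t → τ (t + 1) = P (τ t - α t * deriv (l t) (τ t))) :
    ∀ τstar ∈ Set.Icc a b,
      ∑ t ∈ Finset.Icc 1 T, l t (τ t) - ∑ t ∈ Finset.Icc 1 T, l t τstar ≤
        Real.exp D * Cmax ^ 2 / (2 * Cmin) * (1 + Real.log T) :=
  ogd_logistic_threshold_regret_general a b D hD T Cp Cm hCp hCm Cmax Cmin hCmax hCmin p hp d hd l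
    hl α hα P hP τ hτ₁ hτrec
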